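/- If ρ is a linear combination ρ = ∑_α λ_α ψ_α of KD-classical pure projections ψ_α with real coefficients whose KD distributions satisfy the disjoint-support property of Lemma 1, then for any pair of indices (i*, j*) with i* ≡ m_α (mod y_α) and j* ≡ s_α (mod x_α) simultaneously for one state ψ_α from each factorization level, the KD value ⟨a_{i*}|ρ|b_{j*}⟩⟨b_{j*}|a_{i*}⟩ equals (1/d) times the sum of the coefficients λ_α of those states; hence nonnegativity of the KD distribution of ρ implies nonnegativity of that coefficient sum. -/

import Mathlib

/-!
By linearity of the KD distribution, `KD ρ (i*, j*) = ∑ₜ λₜ KD ψᵗ (i*, j*)`, and the congruences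
put `(i*, j*)` in the support of every `ψᵗ`, where its KD value is `1/d` (Lemma 1). For Lemma 1,
write `g l = ψ_l ⟨b_j|a_l⟩`; then `KD (|ψ⟩⟨ψ|) (i, j) = g i · conj (∑ₗ g l)`. Once `j ≡ s (mod x)`,
`g` takes the same value `c`, with `|c|² = 1/(x d)`, at each of the `x` points of the support of `ψ`,
so the KD value is `x |c|² = 1/d`.
-/

open Finset Complex
open scoped ComplexOrder

/-- ω_n = e^{2πi/n} -/
noncomputable def ww (n : ℕ) : ℂ := Complex.exp (2 * Real.pi * Complex.I / n)

/-- |ψ_{m,s}⟩ = (1/√x) ∑_{k<x} ω_x^{sk} |a_{ky+m}⟩ in ℂ^d (standard basis coords). -/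
noncomputable def psi (d x y m s : ℕ) : Fin d → ℂ :=
  fun t => (1 / Real.sqrt x) *
    ∑ k ∈ Finset.range x, ww x ^ (s * k) * (if (t : ℕ) = k * y + m then 1 else 0)

/-- Fourier basis vector |b_j⟩, coordinates in the standard basis. -/
noncomputable def bvec (d j : ℕ) : Fin d → ℂ :=
  fun i => ww d ^ ((i : ℕ) * j) / Real.sqrt d

/-- rank one projection |v⟩⟨v| as a matrix. -/
noncomputable def proj {d : ℕ} (v : Fin d → ℂ) : Matrix (Fin d) (Fin d) ℂ :=
  fun i j => v i * (starRingEnd ℂ) (v j)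

/-- KD quasiprobability Q_{ij}(ρ) = ⟨a_i|ρ|b_j⟩⟨b_j|a_i⟩ (standard/Fourier bases). -/
noncomputable def KD {d : ℕ} (ρ : Matrix (Fin d) (Fin d) ℂ) (i j : Fin d) : ℂ :=
  (∑ l, ρ i l * bvec d (j : ℕ) l) * (starRingEnd ℂ) (bvec d (j : ℕ) i)

/-- The set of KD-classical pure-state projections for the DFT pair in dimension d. -/
def pureKD (d : ℕ) : Set (Matrix (Fin d) (Fin d) ℂ) :=
  {M | ∃ x y m s : ℕ, x * y = d ∧ m < y ∧ s < x ∧ M = proj (psi d x y m s)}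

open ComplexConjugate

lemma ww_pow_self (n : ℕ) : ww n ^ n = 1 := by
  rcases eq_or_ne n 0 with rfl | hn
  · exact pow_zero _
  · exact (Complex.isPrimitiveRoot_exp n hn).pow_eq_one

lemma conj_ww_pow_mul_ww_pow (n a : ℕ) : conj (ww n) ^ a * ww n ^ a = 1 := by
  rw [← mul_pow, ww, ← Complex.exp_conj, ← Complex.exp_add]
  have h : conj (2 * Real.pi * Complex.I / n) + 2 * Real.pi * Complex.I / n = 0 := by
    simp only [map_div₀, map_mul, Complex.conj_I, map_ofNat, Complex.conj_ofReal, map_natCast]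
    ring
  rw [h, Complex.exp_zero, one_pow]

lemma ww_mul_pow_right (x : ℕ) {y : ℕ} (hy : y ≠ 0) : ww (x * y) ^ y = ww x := by
  rcases eq_or_ne x 0 with rfl | hx
  · simp [ww]
  rw [ww, ww, ← Complex.exp_nat_mul]
  congr 1
  have hy' : (y : ℂ) ≠ 0 := Nat.cast_ne_zero.mpr hy
  push_cast
  field_simp

/-- The phase of `ψ_l ⟨b_j|a_l⟩` is the same at every point `l = k y + m` of the support of `ψ`
once `j ≡ s (mod x)`. -/
lemma ww_pow_mul_conj_ww_pow {d x y : ℕ} (hd : x * y = d) (hy : y ≠ 0) (k m j : ℕ) :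
    ww x ^ (j % x * k) * conj (ww d) ^ ((k * y + m) * j)
      = conj (ww d) ^ (m * j) := by
  subst hd
  have hconj : conj (ww (x * y)) ^ y = conj (ww x) := by
    rw [← map_pow, ww_mul_pow_right x hy]
  have hkj : k * j = x * (k * (j / x)) + j % x * k := by
    nth_rewrite 1 [← Nat.div_add_mod j x]
    ring
  rw [show (k * y + m) * j = y * (k * j) + m * j by ring, hkj, pow_add, pow_mul _ y, hconj,
    pow_add, pow_mul _ x, ← map_pow, ww_pow_self, map_one, one_pow, one_mul, ← mul_assoc,
    mul_comm (ww x ^ _), conj_ww_pow_mul_ww_pow, one_mul]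

lemma psi_apply_of_mod_eq {d x y m : ℕ} (hd : x * y = d) (s : ℕ) (i : Fin d)
    (hi : (i : ℕ) % y = m) :
    psi d x y m s i = 1 / Real.sqrt x * ww x ^ (s * ((i : ℕ) / y)) := by
  have hy : 0 < y := Nat.pos_of_ne_zero (right_ne_zero_of_mul (hd ▸ (Fin.pos i).ne'))
  have hq : (i : ℕ) / y < x :=
    Nat.div_lt_of_lt_mul (by rw [mul_comm, hd]; exact i.isLt)
  rw [psi, Finset.sum_eq_single_of_mem _ (Finset.mem_range.mpr hq)]
  · rw [if_pos (by rw [← hi, Nat.div_add_mod']), mul_one]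
  · intro k _ hk
    rw [if_neg, mul_zero]
    intro h
    apply hk
    rw [h, ← hi, add_comm, Nat.add_mul_div_right _ _ hy, Nat.div_eq_of_lt (Nat.mod_lt _ hy),
      zero_add]

lemma sum_psi_mul {d x y m : ℕ} (hd : x * y = d) (hm : m < y) (s : ℕ) (f : ℕ → ℂ) :
    ∑ l : Fin d, psi d x y m s l * f l
      = 1 / Real.sqrt x * ∑ k ∈ Finset.range x, ww x ^ (s * k) * f (k * y + m) := by
  simp only [psi, Finset.sum_mul, Finset.mul_sum]
  rw [Finset.sum_comm]
  refine Finset.sum_congr rfl fun k hk => ?_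
  have hlt : k * y + m < d := by
    have hk : k + 1 ≤ x := Finset.mem_range.mp hk
    rw [← hd]
    nlinarith
  simp only [mul_ite, ite_mul, mul_one, mul_zero, zero_mul]
  rw [Fin.sum_univ_eq_sum_range
      (fun l => if l = k * y + m then 1 / (Real.sqrt x : ℂ) * ww x ^ (s * k) * f l else 0),
    Finset.sum_ite_eq', if_pos (Finset.mem_range.mpr hlt), mul_assoc]

lemma conj_bvec_apply (d j : ℕ) (l : Fin d) :
    conj (bvec d j l) = conj (ww d) ^ ((l : ℕ) * j) / Real.sqrt d := by
  simp [bvec, map_div₀, map_pow, Complex.conj_ofReal]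

lemma KD_sum_smul {d : ℕ} {ι : Type*} (F : Finset ι) (c : ι → ℂ)
    (M : ι → Matrix (Fin d) (Fin d) ℂ) (i j : Fin d) :
    KD (∑ t ∈ F, c t • M t) i j = ∑ t ∈ F, c t * KD (M t) i j := by
  simp only [KD, Matrix.sum_apply, Matrix.smul_apply, smul_eq_mul, Finset.sum_mul]
  rw [Finset.sum_comm]
  refine Finset.sum_congr rfl fun t _ => ?_
  rw [Finset.mul_sum]
  exact Finset.sum_congr rfl fun l _ => by ring

lemma KD_proj {d : ℕ} (v : Fin d → ℂ) (i j : Fin d) :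
    KD (proj v) i j = v i * conj (bvec d j i)
      * conj (∑ l, v l * conj (bvec d j l)) := by
  simp only [KD, proj, map_sum, map_mul, Complex.conj_conj, Finset.mul_sum, Finset.sum_mul]
  exact Finset.sum_congr rfl fun l _ => by ring

lemma KD_proj_psi {d x y : ℕ} (hd : x * y = d) (i j : Fin d) :
    KD (proj (psi d x y ((i : ℕ) % y) ((j : ℕ) % x))) i j = 1 / d := by
  have hx : (x : ℂ) ≠ 0 := Nat.cast_ne_zero.mpr (left_ne_zero_of_mul (hd ▸ (Fin.pos i).ne'))
  have hy : y ≠ 0 := right_ne_zero_of_mul (hd ▸ (Fin.pos i).ne')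
  have hpoint : psi d x y ((i : ℕ) % y) ((j : ℕ) % x) i * conj (bvec d j i)
      = conj (ww d) ^ ((i : ℕ) % y * j) / (Real.sqrt x * Real.sqrt d) := by
    have hi : (i : ℕ) * j = ((i : ℕ) / y * y + (i : ℕ) % y) * j := by rw [Nat.div_add_mod']
    rw [psi_apply_of_mod_eq hd _ i rfl, conj_bvec_apply, hi,
      ← ww_pow_mul_conj_ww_pow hd hy ((i : ℕ) / y) ((i : ℕ) % y) j]
    ring
  have hsum : ∑ l, psi d x y ((i : ℕ) % y) ((j : ℕ) % x) l * conj (bvec d j l)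
      = x * (conj (ww d) ^ ((i : ℕ) % y * j) / (Real.sqrt x * Real.sqrt d)) := by
    simp only [conj_bvec_apply]
    rw [sum_psi_mul hd (Nat.mod_lt _ (Nat.pos_of_ne_zero hy)) _
      (fun n => conj (ww d) ^ (n * j) / Real.sqrt d)]
    simp only [mul_div_assoc', ww_pow_mul_conj_ww_pow hd hy, Finset.sum_const,
      Finset.card_range, nsmul_eq_mul]
    ring
  have hsq (n : ℕ) : ((Real.sqrt n : ℝ) : ℂ) * (Real.sqrt n : ℝ) = n := by
    norm_cast
    exact Real.mul_self_sqrt (Nat.cast_nonneg n)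
  rw [KD_proj, hpoint, hsum]
  simp only [map_mul, map_div₀, map_pow, Complex.conj_conj, Complex.conj_ofReal, map_natCast]
  calc _ = x * (conj (ww d) ^ ((i : ℕ) % y * j) * ww d ^ ((i : ℕ) % y * j))
        / (((Real.sqrt x : ℝ) : ℂ) * (Real.sqrt x : ℝ)
          * (((Real.sqrt d : ℝ) : ℂ) * (Real.sqrt d : ℝ))) := by
          ring
    _ = 1 / d := by
      rw [conj_ww_pow_mul_ww_pow, hsq, hsq, mul_one, ← div_div, div_self hx]

theorem kd_coefficient_sum_general (p r : ℕ) (m s : ℕ → ℕ) (lam : ℕ → ℝ)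
    (ρ : Matrix (Fin (p ^ r)) (Fin (p ^ r)) ℂ)
    (hρ : ρ = ∑ t ∈ Finset.range (r + 1),
        (lam t : ℂ) • proj (psi (p ^ r) (p ^ t) (p ^ (r - t)) (m t) (s t)))
    (istar jstar : Fin (p ^ r))
    (hi : ∀ t ≤ r, (istar : ℕ) % p ^ (r - t) = m t)
    (hj : ∀ t ≤ r, (jstar : ℕ) % p ^ t = s t) :
    KD ρ istar jstar = ((1 : ℂ) / (p ^ r)) * ∑ t ∈ Finset.range (r + 1), (lam t : ℂ) ∧
    ((∀ i j, 0 ≤ KD ρ i j) → 0 ≤ ∑ t ∈ Finset.range (r + 1), lam t) := by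
  have hmain :
      KD ρ istar jstar = ((1 : ℂ) / (p ^ r)) * ∑ t ∈ Finset.range (r + 1), (lam t : ℂ) := by
    rw [hρ, KD_sum_smul, Finset.mul_sum]
    refine Finset.sum_congr rfl fun t ht => ?_
    have ht : t ≤ r := Nat.lt_succ_iff.mp (Finset.mem_range.mp ht)
    have hd : p ^ t * p ^ (r - t) = p ^ r := by rw [← pow_add, Nat.add_sub_cancel' ht]
    rw [← hi t ht, ← hj t ht, KD_proj_psi hd]
    push_cast
    ring
  refine ⟨hmain, fun hKD => ?_⟩
  have hpos : (0 : ℝ) < 1 / (p : ℝ) ^ r :=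
    one_div_pos.mpr (by exact_mod_cast Fin.pos istar)
  have h0 := hKD istar jstar
  rw [hmain, show ((1 : ℂ) / (p : ℂ) ^ r) * ∑ t ∈ Finset.range (r + 1), (lam t : ℂ)
      = ((1 / (p : ℝ) ^ r * ∑ t ∈ Finset.range (r + 1), lam t : ℝ) : ℂ) by push_cast; ring,
    Complex.zero_le_real] at h0
  exact (mul_nonneg_iff_of_pos_left hpos).mp h0

/-- if ρ = ∑_t λ_t ψ^t (one KD-classical pure projection from each
    factorization level t of d = p^r) and i*, j* satisfy the support congruences of
    Lemma 1 simultaneously for all levels, then KD(ρ)(i*,j*) = (1/d)∑_t λ_t; hence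
    nonnegativity of the KD distribution of ρ forces 0 ≤ ∑_t λ_t. -/
theorem kd_coefficient_sum (p r : ℕ) (hp : p.Prime) (m s : ℕ → ℕ) (lam : ℕ → ℝ)
    (hms : ∀ t ≤ r, m t < p ^ (r - t) ∧ s t < p ^ t)
    (ρ : Matrix (Fin (p ^ r)) (Fin (p ^ r)) ℂ)
    (hρ : ρ = ∑ t ∈ Finset.range (r + 1),
        (lam t : ℂ) • proj (psi (p ^ r) (p ^ t) (p ^ (r - t)) (m t) (s t)))
    (istar jstar : Fin (p ^ r))
    (hi : ∀ t ≤ r, (istar : ℕ) % p ^ (r - t) = m t)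
    (hj : ∀ t ≤ r, (jstar : ℕ) % p ^ t = s t) :
    KD ρ istar jstar = ((1 : ℂ) / (p ^ r)) * ∑ t ∈ Finset.range (r + 1), (lam t : ℂ) ∧
    ((∀ i j, 0 ≤ KD ρ i j) → 0 ≤ ∑ t ∈ Finset.range (r + 1), lam t) :=
  kd_coefficient_sum_general p r m s lam ρ hρ istar jstar hi hj
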